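/- Let α ∈ (0,1), let p_X be a strictly positive probability distribution on 𝒳 and p_{Y|X} a channel with p_{Y|X}(y|x) > 0 for all x, y. Then the Lapidoth–Pfister mutual information of order α satisfies I_α^{LP} = inf over strictly positive probability distributions q̃_{X,Y} on 𝒳×𝒴 and strictly positive probability distributions q_Y on 𝒴 of F_α^{LP}(q̃_{X,Y}, q_Y) := (α/(1−α)) D(q̃_{X,Y} ‖ q̃_X p_{Y|X}) + D(q̃_{X,Y} ‖ q̃_X q_Y) + (α/(1−α)) D(q̃_X ‖ p_X), where q̃_X(x) := Σ_y q̃_{X,Y}(x,y) and (q̃_X q_Y)(x,y) := q̃_X(x) q_Y(y), and the infimum is attained. -/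

import Mathlib

/-! For `α < 1` the Rényi divergence is a minimum of Kullback–Leibler trade-offs:
`(1 - α) D_α(p‖q) = min_r [α D(r‖p) + (1 - α) D(r‖q)]`, attained at the geometric mixture
`r ∝ p^α q^(1-α)` (expand `D(r‖r*)` for that mixture `r*` and use Gibbs' inequality).
By the chain rule `D(q̃‖q̃_X p_{Y|X}) + D(q̃_X‖p_X) = D(q̃‖p_X p_{Y|X})`, so `(1 - α) F` is such a
trade-off with `p = p_X p_{Y|X}`, `q = q̃_X q_Y`, `r = q̃`, whence
`F ≥ D_α(p_X p_{Y|X} ‖ q̃_X q_Y) ≥ I_α^{LP}`. Conversely, let `q_X q_Y` minimise `D_α` over product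
distributions (compactness, then one Hölder step in each coordinate makes it strictly positive)
and let `q̃` be the corresponding geometric mixture. Replacing `q_X` by `q̃_X` only lowers
`D(q̃‖q_X q_Y)`, by `D(q̃_X‖q_X) ≥ 0`, so `F(q̃, q_Y) ≤ D_α(p_X p_{Y|X} ‖ q_X q_Y) = I_α^{LP}`. -/

/-- A probability mass function on a finite type. -/
def IsPMF {Z : Type*} [Fintype Z] (q : Z → ℝ) : Prop :=
  (∀ z, 0 ≤ q z) ∧ ∑ z, q z = 1

/-- Kullback--Leibler divergence (natural log). -/
noncomputable def klD {Z : Type*} [Fintype Z] (p q : Z → ℝ) : ℝ :=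
  ∑ z, p z * Real.log (p z / q z)

/-- Rényi divergence of order `α`, valued in `EReal` (equal to `⊤` when `α > 1` and
`q` vanishes somewhere on the support of `p`). -/
noncomputable def renyiDE {Z : Type*} [Fintype Z] (α : ℝ) (p q : Z → ℝ) : EReal :=
  if 1 < α ∧ ∃ z, p z ≠ 0 ∧ q z = 0 then ⊤
  else (((1 / (α - 1)) * Real.log (∑ z, p z ^ α * q z ^ (1 - α)) : ℝ) : EReal)

/-- Lapidoth--Pfister mutual information of order `α`:
the minimum over product distributions `q_X q_Y` of `D_α(p_X p_{Y|X} ‖ q_X q_Y)`. -/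
noncomputable def lpMI {X Y : Type*} [Fintype X] [Fintype Y]
    (α : ℝ) (pX : X → ℝ) (pYX : X → Y → ℝ) : EReal :=
  sInf {v : EReal | ∃ qX : X → ℝ, ∃ qY : Y → ℝ, IsPMF qX ∧ IsPMF qY ∧
    v = renyiDE α (fun z : X × Y => pX z.1 * pYX z.1 z.2)
          (fun z : X × Y => qX z.1 * qY z.2)}

section Divergences

variable {Z : Type*} [Fintype Z]

lemma IsPMF.exists_pos {q : Z → ℝ} (hq : IsPMF q) : ∃ z, 0 < q z := by
  obtain ⟨z, -, hz⟩ := Finset.exists_ne_zero_of_sum_ne_zero (s := Finset.univ) (f := q)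
    (by rw [hq.2]; exact one_ne_zero)
  exact ⟨z, (hq.1 z).lt_of_ne' hz⟩

lemma klD_self (s : Z → ℝ) : klD s s = 0 :=
  Finset.sum_eq_zero fun z _ => by by_cases h : s z = 0 <;> simp [h]

lemma klD_nonneg {r s : Z → ℝ} (hr : IsPMF r) (hs : IsPMF s) (hs_pos : ∀ z, 0 < s z) :
    0 ≤ klD r s := by
  have key : ∀ z, r z - s z ≤ r z * Real.log (r z / s z) := by
    intro z
    rcases (hr.1 z).eq_or_lt with h | h
    · rw [← h]
      simpa using (hs_pos z).le
    · calc r z - s z = r z * (1 - (r z / s z)⁻¹) := by field_simp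
        _ ≤ r z * Real.log (r z / s z) :=
          mul_le_mul_of_nonneg_left (Real.one_sub_inv_le_log_of_pos (div_pos h (hs_pos z))) h.le
  calc (0 : ℝ) = ∑ z, (r z - s z) := by rw [Finset.sum_sub_distrib, hr.2, hs.2, sub_self]
    _ ≤ klD r s := Finset.sum_le_sum fun z _ => key z

noncomputable def hellingerSum (α : ℝ) (p q : Z → ℝ) : ℝ :=
  ∑ z, p z ^ α * q z ^ (1 - α)

noncomputable def geomMixture (α : ℝ) (p q : Z → ℝ) (z : Z) : ℝ :=
  p z ^ α * q z ^ (1 - α) / hellingerSum α p q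

noncomputable def renyiDiv (α : ℝ) (p q : Z → ℝ) : ℝ :=
  1 / (α - 1) * Real.log (hellingerSum α p q)

lemma renyiDE_eq_renyiDiv {α : ℝ} (hα : α ≤ 1) (p q : Z → ℝ) :
    renyiDE α p q = renyiDiv α p q := by
  rw [renyiDE, if_neg fun h => hα.not_gt h.1]
  rfl

lemma hellingerSum_pos {α : ℝ} {p q : Z → ℝ} (hp : ∀ z, 0 < p z) (hq : ∀ z, 0 ≤ q z)
    {z₀ : Z} (hz₀ : 0 < q z₀) : 0 < hellingerSum α p q :=
  Finset.sum_pos' (fun z _ => mul_nonneg (Real.rpow_nonneg (hp z).le _) (Real.rpow_nonneg (hq z) _))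
    ⟨z₀, Finset.mem_univ _, mul_pos (Real.rpow_pos_of_pos (hp z₀) _) (Real.rpow_pos_of_pos hz₀ _)⟩

lemma hellingerSum_le_one {α : ℝ} (hα0 : 0 ≤ α) (hα1 : α ≤ 1) {p q : Z → ℝ} (hp : IsPMF p)
    (hq : IsPMF q) : hellingerSum α p q ≤ 1 :=
  calc hellingerSum α p q ≤ ∑ z, (α * p z + (1 - α) * q z) :=
        Finset.sum_le_sum fun z _ => Real.geom_mean_le_arith_mean2_weighted hα0
          (sub_nonneg.2 hα1) (hp.1 z) (hq.1 z) (by ring)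
    _ = 1 := by
        rw [Finset.sum_add_distrib, ← Finset.mul_sum, ← Finset.mul_sum, hp.2, hq.2]
        ring

lemma hellingerSum_self {α : ℝ} {p : Z → ℝ} (hp : ∀ z, 0 < p z) :
    hellingerSum α p p = ∑ z, p z := by
  refine Finset.sum_congr rfl fun z _ => ?_
  rw [← Real.rpow_add (hp z), add_sub_cancel, Real.rpow_one]

lemma geomMixture_pos [Nonempty Z] (α : ℝ) {p q : Z → ℝ} (hp : ∀ z, 0 < p z)
    (hq : ∀ z, 0 < q z) (z : Z) : 0 < geomMixture α p q z :=
  div_pos (mul_pos (Real.rpow_pos_of_pos (hp z) _) (Real.rpow_pos_of_pos (hq z) _))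
    (hellingerSum_pos hp (fun z => (hq z).le) (hq (Classical.arbitrary Z)))

lemma isPMF_geomMixture [Nonempty Z] (α : ℝ) {p q : Z → ℝ} (hp : ∀ z, 0 < p z)
    (hq : ∀ z, 0 < q z) : IsPMF (geomMixture α p q) := by
  refine ⟨fun z => (geomMixture_pos α hp hq z).le, ?_⟩
  simp only [geomMixture, ← Finset.sum_div]
  exact div_self (hellingerSum_pos hp (fun z => (hq z).le) (hq (Classical.arbitrary Z))).ne'

end Divergences

section Variational

variable {Z : Type*} [Fintype Z] [Nonempty Z] {p q : Z → ℝ}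

lemma mul_klD_add_one_sub_mul_klD (α : ℝ) (hp : ∀ z, 0 < p z) (hq : ∀ z, 0 < q z) {r : Z → ℝ}
    (hr : ∑ z, r z = 1) :
    α * klD r p + (1 - α) * klD r q =
      klD r (geomMixture α p q) - Real.log (hellingerSum α p q) := by
  have hH := hellingerSum_pos (α := α) hp (fun z => (hq z).le) (hq (Classical.arbitrary Z))
  suffices klD r (geomMixture α p q) =
      α * klD r p + (1 - α) * klD r q + (∑ z, r z) * Real.log (hellingerSum α p q) by
    rw [this, hr]
    ring
  simp only [klD, geomMixture, Finset.mul_sum, Finset.sum_mul, ← Finset.sum_add_distrib]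
  refine Finset.sum_congr rfl fun z _ => ?_
  rcases eq_or_ne (r z) 0 with hr0 | hr0
  · simp [hr0]
  have hpα := Real.rpow_pos_of_pos (hp z) α
  have hq1α := Real.rpow_pos_of_pos (hq z) (1 - α)
  rw [Real.log_div hr0 (div_pos (mul_pos hpα hq1α) hH).ne',
    Real.log_div (mul_pos hpα hq1α).ne' hH.ne',
    Real.log_mul hpα.ne' hq1α.ne', Real.log_rpow (hp z), Real.log_rpow (hq z),
    Real.log_div hr0 (hp z).ne', Real.log_div hr0 (hq z).ne']
  ring

lemma div_mul_klD_add_klD_eq {α : ℝ} (hα : α ≠ 1) (hp : ∀ z, 0 < p z) (hq : ∀ z, 0 < q z)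
    {r : Z → ℝ} (hr : ∑ z, r z = 1) :
    α / (1 - α) * klD r p + klD r q = renyiDiv α p q + klD r (geomMixture α p q) / (1 - α) := by
  have h1α : 1 - α ≠ 0 := sub_ne_zero.2 hα.symm
  have hα1 : α - 1 ≠ 0 := sub_ne_zero.2 hα
  rw [renyiDiv]
  field_simp
  linear_combination (α - 1) * mul_klD_add_one_sub_mul_klD α hp hq hr

lemma renyiDiv_le_klD {α : ℝ} (hα : α < 1) (hp : ∀ z, 0 < p z) (hq : ∀ z, 0 < q z) {r : Z → ℝ}
    (hr : IsPMF r) : renyiDiv α p q ≤ α / (1 - α) * klD r p + klD r q := by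
  rw [div_mul_klD_add_klD_eq hα.ne hp hq hr.2]
  exact le_add_of_nonneg_right (div_nonneg
    (klD_nonneg hr (isPMF_geomMixture α hp hq) (geomMixture_pos α hp hq)) (sub_pos.2 hα).le)

lemma klD_geomMixture_eq_renyiDiv {α : ℝ} (hα : α ≠ 1) (hp : ∀ z, 0 < p z) (hq : ∀ z, 0 < q z) :
    α / (1 - α) * klD (geomMixture α p q) p + klD (geomMixture α p q) q = renyiDiv α p q := by
  rw [div_mul_klD_add_klD_eq hα hp hq (isPMF_geomMixture α hp hq).2, klD_self, zero_div,
    add_zero]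

end Variational

lemma exists_pos_isMaxOn_sum_rpow_mul {ι : Type*} [Fintype ι] [Nonempty ι] {α : ℝ} (hα0 : 0 < α)
    (hα1 : α ≤ 1) {A : ι → ℝ} (hA : ∀ i, 0 < A i) :
    ∃ u₀ : ι → ℝ, IsPMF u₀ ∧ (∀ i, 0 < u₀ i) ∧
      ∀ u, IsPMF u → ∑ i, u i ^ (1 - α) * A i ≤ ∑ i, u₀ i ^ (1 - α) * A i := by
  set W := ∑ i, A i ^ (1 / α)
  have hW : 0 < W := Finset.sum_pos (fun i _ => Real.rpow_pos_of_pos (hA i) _) Finset.univ_nonempty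
  set r : ι → ℝ := fun i => A i ^ (1 / α) / W
  have hr_pos : ∀ i, 0 < r i := fun i => div_pos (Real.rpow_pos_of_pos (hA i) _) hW
  have hr : IsPMF r := ⟨fun i => (hr_pos i).le, by
    simp only [r, ← Finset.sum_div]
    exact div_self hW.ne'⟩
  have hA_eq : ∀ i, A i = W ^ α * r i ^ α := by
    intro i
    rw [← Real.mul_rpow hW.le (hr_pos i).le, mul_div_cancel₀ _ hW.ne', ← Real.rpow_mul (hA i).le,
      one_div_mul_cancel hα0.ne', Real.rpow_one]
  have hsum_eq : ∀ u : ι → ℝ, ∑ i, u i ^ (1 - α) * A i = W ^ α * hellingerSum α r u := by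
    intro u
    simp only [hellingerSum, Finset.mul_sum, hA_eq]
    exact Finset.sum_congr rfl fun i _ => by ring
  refine ⟨r, hr, hr_pos, fun u hu => ?_⟩
  rw [hsum_eq, hsum_eq, hellingerSum_self hr_pos, hr.2, mul_one]
  exact mul_le_of_le_one_right (Real.rpow_nonneg hW.le _) (hellingerSum_le_one hα0.le hα1 hr hu)

section Marginal

variable {X Y : Type*} [Fintype Y]

def marginal (qt : X × Y → ℝ) (x : X) : ℝ :=
  ∑ y, qt (x, y)

lemma IsPMF.marginal [Fintype X] {qt : X × Y → ℝ} (h : IsPMF qt) : IsPMF (marginal qt) :=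
  ⟨fun x => Finset.sum_nonneg fun y _ => h.1 (x, y), by rw [← h.2, Fintype.sum_prod_type]; rfl⟩

lemma marginal_pos [Nonempty Y] {qt : X × Y → ℝ} (h : ∀ z, 0 < qt z) (x : X) :
    0 < marginal qt x :=
  Finset.sum_pos (fun y _ => h (x, y)) Finset.univ_nonempty

lemma IsPMF.prod [Fintype X] {u : X → ℝ} {v : Y → ℝ} (hu : IsPMF u) (hv : IsPMF v) :
    IsPMF (fun z : X × Y => u z.1 * v z.2) :=
  ⟨fun z => mul_nonneg (hu.1 z.1) (hv.1 z.2), by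
    rw [Fintype.sum_prod_type, ← Finset.sum_mul_sum, hu.2, hv.2, one_mul]⟩

lemma klD_chain [Fintype X] [Nonempty Y] {qt : X × Y → ℝ} (hqt : ∀ z, 0 < qt z) {a : X → ℝ}
    (ha : ∀ x, 0 < a x) {c : X × Y → ℝ} (hc : ∀ z, 0 < c z) :
    klD qt (fun z => a z.1 * c z) =
      klD qt (fun z => marginal qt z.1 * c z) + klD (marginal qt) a := by
  have hm := marginal_pos hqt
  have hsplit : klD (marginal qt) a = ∑ z, qt z * Real.log (marginal qt z.1 / a z.1) := by
    simp only [klD, Fintype.sum_prod_type, marginal, Finset.sum_mul]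
  rw [hsplit, klD, klD, ← Finset.sum_add_distrib]
  refine Finset.sum_congr rfl fun z _ => ?_
  rw [Real.log_div (hqt z).ne' (mul_pos (ha z.1) (hc z)).ne',
    Real.log_div (hqt z).ne' (mul_pos (hm z.1) (hc z)).ne', Real.log_div (hm z.1).ne' (ha z.1).ne',
    Real.log_mul (ha z.1).ne' (hc z).ne', Real.log_mul (hm z.1).ne' (hc z).ne']
  ring

lemma hellingerSum_prod_eq_sum_fst [Fintype X] (α : ℝ) (P : X × Y → ℝ) {u : X → ℝ} {v : Y → ℝ}
    (hu : ∀ x, 0 ≤ u x) (hv : ∀ y, 0 ≤ v y) :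
    hellingerSum α P (fun z => u z.1 * v z.2) =
      ∑ x, u x ^ (1 - α) * hellingerSum α (fun y => P (x, y)) v := by
  simp only [hellingerSum, Fintype.sum_prod_type, Finset.mul_sum, Real.mul_rpow (hu _) (hv _)]
  exact Finset.sum_congr rfl fun x _ => Finset.sum_congr rfl fun y _ => by ring

lemma hellingerSum_prod_eq_sum_snd [Fintype X] (α : ℝ) (P : X × Y → ℝ) {u : X → ℝ} {v : Y → ℝ}
    (hu : ∀ x, 0 ≤ u x) (hv : ∀ y, 0 ≤ v y) :
    hellingerSum α P (fun z => u z.1 * v z.2) =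
      ∑ y, v y ^ (1 - α) * hellingerSum α (fun x => P (x, y)) u := by
  simp only [hellingerSum, Fintype.sum_prod_type_right, Finset.mul_sum, Real.mul_rpow (hu _) (hv _)]
  exact Finset.sum_congr rfl fun y _ => Finset.sum_congr rfl fun x _ => by ring

end Marginal

section ProductOptimum

variable {X Y : Type*} [Fintype X] [Fintype Y] [Nonempty X] [Nonempty Y]

lemma exists_isMaxOn_hellingerSum_prod {α : ℝ} (hα : α ≤ 1) (P : X × Y → ℝ) :
    ∃ u v, IsPMF u ∧ IsPMF v ∧ ∀ u' v', IsPMF u' → IsPMF v' →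
      hellingerSum α P (fun z => u' z.1 * v' z.2) ≤ hellingerSum α P (fun z => u z.1 * v z.2) := by
  have hcont : Continuous fun uv : (X → ℝ) × (Y → ℝ) =>
      hellingerSum α P (fun z => uv.1 z.1 * uv.2 z.2) := by
    refine continuous_finsetSum _ fun z _ => continuous_const.mul ?_
    exact (((continuous_apply z.1).comp continuous_fst).mul
      ((continuous_apply z.2).comp continuous_snd)).rpow_const fun _ => Or.inr (sub_nonneg.2 hα)
  obtain ⟨⟨u, v⟩, ⟨hu, hv⟩, hmax⟩ := (isCompact_stdSimplex ℝ X).prod (isCompact_stdSimplex ℝ Y)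
    |>.exists_isMaxOn
      ((isPathConnected_stdSimplex X).nonempty.prod (isPathConnected_stdSimplex Y).nonempty)
      hcont.continuousOn
  exact ⟨u, v, hu, hv, fun u' v' hu' hv' => hmax (Set.mk_mem_prod hu' hv')⟩

lemma exists_pos_isMaxOn_hellingerSum_prod {α : ℝ} (hα0 : 0 < α) (hα1 : α ≤ 1) {P : X × Y → ℝ}
    (hP : ∀ z, 0 < P z) :
    ∃ u v, IsPMF u ∧ (∀ x, 0 < u x) ∧ IsPMF v ∧ (∀ y, 0 < v y) ∧ ∀ u' v', IsPMF u' → IsPMF v' →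
      hellingerSum α P (fun z => u' z.1 * v' z.2) ≤ hellingerSum α P (fun z => u z.1 * v z.2) := by
  -- The maximiser given by compactness may vanish somewhere; one Hölder step per coordinate
  -- fixes that.
  obtain ⟨u₁, v₁, hu₁, hv₁, hmax⟩ := exists_isMaxOn_hellingerSum_prod hα1 P
  obtain ⟨y₀, hy₀⟩ := hv₁.exists_pos
  obtain ⟨u, hu, hu_pos, hu_max⟩ := exists_pos_isMaxOn_sum_rpow_mul hα0 hα1
    fun x => hellingerSum_pos (α := α) (fun y => hP (x, y)) hv₁.1 hy₀
  obtain ⟨v, hv, hv_pos, hv_max⟩ := exists_pos_isMaxOn_sum_rpow_mul hα0 hα1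
    fun y => hellingerSum_pos (α := α) (fun x => hP (x, y)) hu.1 (hu_pos (Classical.arbitrary X))
  refine ⟨u, v, hu, hu_pos, hv, hv_pos, fun u' v' hu' hv' => ?_⟩
  calc hellingerSum α P (fun z => u' z.1 * v' z.2)
      ≤ hellingerSum α P (fun z => u₁ z.1 * v₁ z.2) := hmax u' v' hu' hv'
    _ ≤ hellingerSum α P (fun z => u z.1 * v₁ z.2) := by
      rw [hellingerSum_prod_eq_sum_fst α P hu₁.1 hv₁.1, hellingerSum_prod_eq_sum_fst α P hu.1 hv₁.1]
      exact hu_max u₁ hu₁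
    _ ≤ hellingerSum α P (fun z => u z.1 * v z.2) := by
      rw [hellingerSum_prod_eq_sum_snd α P hu.1 hv₁.1, hellingerSum_prod_eq_sum_snd α P hu.1 hv.1]
      exact hv_max v₁ hv₁

lemma exists_pos_isMinOn_renyiDiv_prod {α : ℝ} (hα0 : 0 < α) (hα1 : α < 1) {P : X × Y → ℝ}
    (hP : ∀ z, 0 < P z) :
    ∃ u v, IsPMF u ∧ (∀ x, 0 < u x) ∧ IsPMF v ∧ (∀ y, 0 < v y) ∧ ∀ u' v', IsPMF u' → IsPMF v' →
      renyiDiv α P (fun z => u z.1 * v z.2) ≤ renyiDiv α P (fun z => u' z.1 * v' z.2) := by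
  obtain ⟨u, v, hu, hu_pos, hv, hv_pos, hmax⟩ := exists_pos_isMaxOn_hellingerSum_prod hα0 hα1.le hP
  refine ⟨u, v, hu, hu_pos, hv, hv_pos, fun u' v' hu' hv' => ?_⟩
  obtain ⟨z₀, hz₀⟩ := (hu'.prod hv').exists_pos
  exact mul_le_mul_of_nonpos_left
    (Real.log_le_log (hellingerSum_pos hP (hu'.prod hv').1 hz₀) (hmax u' v' hu' hv'))
    (div_nonpos_of_nonneg_of_nonpos zero_le_one (sub_nonpos.2 hα1.le))

end ProductOptimum

section Objective

variable {X Y : Type*} [Fintype X] [Fintype Y] [Nonempty Y]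

/-- The Lapidoth–Pfister objective `F_α^{LP}(q̃_{X,Y}, q_Y)`. -/
noncomputable def lpObjective (α : ℝ) (pX : X → ℝ) (pYX : X → Y → ℝ) (qt : X × Y → ℝ)
    (qY : Y → ℝ) : ℝ :=
  α / (1 - α) * klD qt (fun z => marginal qt z.1 * pYX z.1 z.2) +
    klD qt (fun z => marginal qt z.1 * qY z.2) + α / (1 - α) * klD (marginal qt) pX

lemma lpObjective_eq (α : ℝ) {pX : X → ℝ} (hpX : ∀ x, 0 < pX x) {pYX : X → Y → ℝ}
    (hpYX : ∀ x y, 0 < pYX x y) {qt : X × Y → ℝ} (hqt : ∀ z, 0 < qt z) (qY : Y → ℝ) :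
    lpObjective α pX pYX qt qY =
      α / (1 - α) * klD qt (fun z => pX z.1 * pYX z.1 z.2) +
        klD qt (fun z => marginal qt z.1 * qY z.2) := by
  rw [lpObjective, klD_chain hqt hpX (c := fun z => pYX z.1 z.2) fun z => hpYX z.1 z.2]
  ring

lemma renyiDiv_le_lpObjective [Nonempty X] {α : ℝ} (hα : α < 1) {pX : X → ℝ}
    (hpX : ∀ x, 0 < pX x) {pYX : X → Y → ℝ} (hpYX : ∀ x y, 0 < pYX x y) {qt : X × Y → ℝ}
    (hqt : IsPMF qt) (hqt_pos : ∀ z, 0 < qt z)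
    {qY : Y → ℝ} (hqY : ∀ y, 0 < qY y) :
    renyiDiv α (fun z : X × Y => pX z.1 * pYX z.1 z.2) (fun z => marginal qt z.1 * qY z.2) ≤
      lpObjective α pX pYX qt qY := by
  rw [lpObjective_eq α hpX hpYX hqt_pos]
  exact renyiDiv_le_klD hα (fun z => mul_pos (hpX z.1) (hpYX z.1 z.2))
    (fun z => mul_pos (marginal_pos hqt_pos z.1) (hqY z.2)) hqt

lemma lpObjective_geomMixture_le [Nonempty X] {α : ℝ} (hα : α ≠ 1) {pX : X → ℝ}
    (hpX : ∀ x, 0 < pX x) {pYX : X → Y → ℝ} (hpYX : ∀ x y, 0 < pYX x y) {u : X → ℝ}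
    (hu : IsPMF u) (hu_pos : ∀ x, 0 < u x)
    {v : Y → ℝ} (hv_pos : ∀ y, 0 < v y) :
    lpObjective α pX pYX
        (geomMixture α (fun z : X × Y => pX z.1 * pYX z.1 z.2) (fun z => u z.1 * v z.2)) v ≤
      renyiDiv α (fun z : X × Y => pX z.1 * pYX z.1 z.2) (fun z => u z.1 * v z.2) := by
  have hP : ∀ z : X × Y, 0 < pX z.1 * pYX z.1 z.2 := fun z => mul_pos (hpX z.1) (hpYX z.1 z.2)
  have huv : ∀ z : X × Y, 0 < u z.1 * v z.2 := fun z => mul_pos (hu_pos z.1) (hv_pos z.2)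
  set qt := geomMixture α (fun z : X × Y => pX z.1 * pYX z.1 z.2) (fun z => u z.1 * v z.2)
  have hqt_pos : ∀ z, 0 < qt z := geomMixture_pos α hP huv
  -- Replacing `u` by the marginal of `qt` can only decrease `D(qt ‖ u ⊗ v)`.
  have hsplit := klD_chain hqt_pos hu_pos (c := fun z => v z.2) fun z => hv_pos z.2
  have hgibbs := klD_nonneg (isPMF_geomMixture α hP huv).marginal hu hu_pos
  rw [lpObjective_eq α hpX hpYX hqt_pos, ← klD_geomMixture_eq_renyiDiv hα hP huv]
  linarith

end Objective

theorem lpMI_eq_inf_FLP_general {X Y : Type*} [Fintype X] [Fintype Y] [Nonempty X] [Nonempty Y]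
    (α : ℝ) (hα : 0 < α ∧ α < 1)
    (pX : X → ℝ) (hpXpos : ∀ x, 0 < pX x)
    (pYX : X → Y → ℝ) (hpYXpos : ∀ x y, 0 < pYX x y) :
    IsLeast
      {v : EReal | ∃ qt : X × Y → ℝ, IsPMF qt ∧ (∀ z, 0 < qt z) ∧
        ∃ qY : Y → ℝ, IsPMF qY ∧ (∀ y, 0 < qY y) ∧
        v = (((α / (1 - α)) *
                klD qt (fun z : X × Y => (∑ y, qt (z.1, y)) * pYX z.1 z.2)
              + klD qt (fun z : X × Y => (∑ y, qt (z.1, y)) * qY z.2)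
              + (α / (1 - α)) * klD (fun x => ∑ y, qt (x, y)) pX : ℝ) : EReal)}
      (lpMI α pX pYX) := by
  set P : X × Y → ℝ := fun z => pX z.1 * pYX z.1 z.2
  have hP : ∀ z, 0 < P z := fun z => mul_pos (hpXpos z.1) (hpYXpos z.1 z.2)
  obtain ⟨u, v, hu, hu_pos, hv, hv_pos, hmin⟩ := exists_pos_isMinOn_renyiDiv_prod hα.1 hα.2 hP
  have hlower : ∀ qt qY, IsPMF qt → (∀ z, 0 < qt z) → IsPMF qY → (∀ y, 0 < qY y) →
      renyiDiv α P (fun z => u z.1 * v z.2) ≤ lpObjective α pX pYX qt qY :=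
    fun qt qY hqt hqt_pos hqY hqY_pos => (hmin _ qY hqt.marginal hqY).trans
      (renyiDiv_le_lpObjective hα.2 hpXpos hpYXpos hqt hqt_pos hqY_pos)
  have hlpMI : lpMI α pX pYX = renyiDiv α P (fun z => u z.1 * v z.2) := by
    refine IsLeast.csInf_eq ⟨⟨u, v, hu, hv, (renyiDE_eq_renyiDiv hα.2.le _ _).symm⟩, ?_⟩
    rintro _ ⟨u', v', hu', hv', rfl⟩
    rw [renyiDE_eq_renyiDiv hα.2.le]
    exact EReal.coe_le_coe_iff.2 (hmin u' v' hu' hv')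
  have huv : ∀ z : X × Y, 0 < u z.1 * v z.2 := fun z => mul_pos (hu_pos z.1) (hv_pos z.2)
  set qt := geomMixture α P (fun z => u z.1 * v z.2)
  have hqt : IsPMF qt := isPMF_geomMixture α hP huv
  have hqt_pos : ∀ z, 0 < qt z := geomMixture_pos α hP huv
  have hF : lpObjective α pX pYX qt v = renyiDiv α P (fun z => u z.1 * v z.2) :=
    le_antisymm (lpObjective_geomMixture_le hα.2.ne hpXpos hpYXpos hu hu_pos hv_pos)
      (hlower qt v hqt hqt_pos hv hv_pos)
  rw [hlpMI]
  refine ⟨⟨qt, hqt, hqt_pos, v, hv, hv_pos, congrArg _ hF.symm⟩, ?_⟩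
  rintro _ ⟨qt', hqt', hqt'_pos, qY, hqY, hqY_pos, rfl⟩
  exact EReal.coe_le_coe_iff.2 (hlower qt' qY hqt' hqt'_pos hqY hqY_pos)

/-- For `α ∈ (0,1)`, the Lapidoth--Pfister mutual information of order `α` is the infimum,
over strictly positive joint distributions `q̃_{X,Y}` and strictly positive output
distributions `q_Y`, of
`F_α^{LP}(q̃_{X,Y}, q_Y) = (α/(1−α)) D(q̃_{X,Y} ‖ q̃_X p_{Y|X}) + D(q̃_{X,Y} ‖ q̃_X q_Y)
  + (α/(1−α)) D(q̃_X ‖ p_X)`, and the infimum is attained. -/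
theorem lpMI_eq_inf_FLP {X Y : Type*} [Fintype X] [Fintype Y] [Nonempty X] [Nonempty Y]
    (α : ℝ) (hα : 0 < α ∧ α < 1)
    (pX : X → ℝ) (hpX : IsPMF pX) (hpXpos : ∀ x, 0 < pX x)
    (pYX : X → Y → ℝ) (hpYX : ∀ x, IsPMF (pYX x)) (hpYXpos : ∀ x y, 0 < pYX x y) :
    IsLeast
      {v : EReal | ∃ qt : X × Y → ℝ, IsPMF qt ∧ (∀ z, 0 < qt z) ∧
        ∃ qY : Y → ℝ, IsPMF qY ∧ (∀ y, 0 < qY y) ∧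
        v = (((α / (1 - α)) *
                klD qt (fun z : X × Y => (∑ y, qt (z.1, y)) * pYX z.1 z.2)
              + klD qt (fun z : X × Y => (∑ y, qt (z.1, y)) * qY z.2)
              + (α / (1 - α)) * klD (fun x => ∑ y, qt (x, y)) pX : ℝ) : EReal)}
      (lpMI α pX pYX) :=
  lpMI_eq_inf_FLP_general α hα pX hpXpos pYX hpYXpos
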